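/- For every integer d ≥ 2, there exists a finite vertex set V and a system of m = ⌈log₂ log₂ d⌉ trees on V, each of maximum degree at most d, that has no cooperative coloring; consequently m_T(d) > log₂ log₂ d, where T is the class of trees. -/

import Mathlib

/-
From `m` trees `T k` on `V` without a cooperative colouring we build `m + 1` trees on
`V × Option V`, viewing `(h, none)` as a hub and `{h} × V` as its copy of `V`. Tree `0` joins
every hub to all of its copy (and the hubs to one another); tree `k + 1` is `T k` on the hubs with
a copy of `T k` hanging below each hub. In a cooperative colouring either some hub lies in the set
of tree `0`, and then its copy is covered by the other sets, or no hub does, and then the hubs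
are; either way the old system would be colourable. The number of vertices squares at each step
while the degrees only grow to about twice the old number of vertices, so there are `m` trees of
maximum degree `2 ^ 2 ^ (m - 1)` without a cooperative colouring.

The set defining `m_T(d)` is nonempty by a counting version of the Lovász local lemma: colour the
vertices at random with `m = 8 d` colours; the bad events are edges of the `j`-th graph coloured
`j` at both ends, each of probability `1 / m ^ 2` and dependent on at most `2 m d` others.
-/

/-- A set of vertices is independent in the graph `G`:
no two of its vertices are adjacent. -/
def IndepIn {V : Type*} (G : SimpleGraph V) (I : Set V) : Prop :=
  ∀ ⦃u⦄, u ∈ I → ∀ ⦃v⦄, v ∈ I → ¬ G.Adj u v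

/-- `(I j)` is a cooperative coloring for the system `G` of graphs:
each `I j` is independent in `G j` and the sets `I j` cover all vertices. -/
def IsCoopColoring {V : Type*} {m : ℕ} (G : Fin m → SimpleGraph V)
    (I : Fin m → Set V) : Prop :=
  (∀ j, IndepIn (G j) (I j)) ∧ (⋃ j, I j) = Set.univ

/-- The system `G` of graphs has a cooperative coloring. -/
def HasCoopColoring {V : Type*} {m : ℕ} (G : Fin m → SimpleGraph V) : Prop :=
  ∃ I : Fin m → Set V, IsCoopColoring G I

/-- The maximum degree of a graph on a finite vertex set. -/
noncomputable def maxDeg {V : Type*} [Fintype V] (G : SimpleGraph V) : ℕ :=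
  Finset.univ.sup fun v => (G.neighborSet v).ncard

/-- Every system of `m` trees of maximum degree at most `d` on a common finite
vertex set has a cooperative coloring. -/
def TreesColorable (d m : ℕ) : Prop :=
  ∀ (V : Type) [Fintype V] (T : Fin m → SimpleGraph V),
    (∀ i, (T i).IsTree) → (∀ i, maxDeg (T i) ≤ d) → HasCoopColoring T

/-- `m_T(d)`: the least `m` such that every `m` trees of maximum degree at most
`d` on a common finite vertex set have a cooperative coloring. -/
noncomputable def mT (d : ℕ) : ℕ := sInf {m | TreesColorable d m}

open SimpleGraph

section CoopColoring

variable {V W : Type*} {m : ℕ}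

lemma IndepIn.preimage {G : SimpleGraph V} {H : SimpleGraph W} {f : V → W}
    (hf : ∀ u v, G.Adj u v → H.Adj (f u) (f v)) {I : Set W} (hI : IndepIn H I) :
    IndepIn G (f ⁻¹' I) :=
  fun _ hu _ hv huv => hI hu hv (hf _ _ huv)

lemma hasCoopColoring_of_comap {G : Fin m → SimpleGraph V} {H : Fin m → SimpleGraph W}
    (f : V → W) (hf : ∀ k u v, (G k).Adj u v → (H k).Adj (f u) (f v)) {I : Fin m → Set W}
    (hI : ∀ k, IndepIn (H k) (I k)) (hcov : ∀ v, ∃ k, f v ∈ I k) : HasCoopColoring G :=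
  ⟨fun k => f ⁻¹' I k, fun k => (hI k).preimage (hf k),
    Set.eq_univ_of_forall fun v => Set.mem_iUnion.2 (hcov v)⟩

lemma HasCoopColoring.comap {G : Fin m → SimpleGraph V} {H : Fin m → SimpleGraph W} (f : V → W)
    (hf : ∀ k u v, (G k).Adj u v → (H k).Adj (f u) (f v)) (hH : HasCoopColoring H) :
    HasCoopColoring G := by
  obtain ⟨I, hI, hcov⟩ := hH
  exact hasCoopColoring_of_comap f hf hI fun v => Set.mem_iUnion.1 (hcov ▸ Set.mem_univ (f v))

lemma HasCoopColoring.of_comp_injective {m' : ℕ} {G : Fin m' → SimpleGraph V}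
    {f : Fin m → Fin m'} (hf : Function.Injective f) (h : HasCoopColoring (G ∘ f)) :
    HasCoopColoring G := by
  obtain ⟨I, hI, hcov⟩ := h
  refine ⟨fun j => ⋃ (k) (_ : f k = j), I k, fun j u hu v hv => ?_,
    Set.eq_univ_of_forall fun v => ?_⟩
  · simp only [Set.mem_iUnion] at hu hv
    obtain ⟨k, rfl, hu⟩ := hu
    obtain ⟨k', hk', hv⟩ := hv
    rw [hf hk'] at hv
    exact hI k hu hv
  · obtain ⟨k, hk⟩ := Set.mem_iUnion.1 (hcov ▸ Set.mem_univ v)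
    exact Set.mem_iUnion.2 ⟨f k, Set.mem_iUnion₂.2 ⟨k, rfl, hk⟩⟩

/-- A hub in `I 0` forces its whole copy to be covered by the other sets; if there is no such hub,
the hubs themselves are covered by them. -/
lemma hasCoopColoring_of_hub_copy {G : Fin m → SimpleGraph V} {H : Fin (m + 1) → SimpleGraph W}
    (hub : V → W) (copy : V → V → W)
    (hhub : ∀ k u v, (G k).Adj u v → (H k.succ).Adj (hub u) (hub v))
    (hcopy : ∀ k a u v, (G k).Adj u v → (H k.succ).Adj (copy a u) (copy a v))
    (hstar : ∀ a v, (H 0).Adj (hub a) (copy a v)) (hH : HasCoopColoring H) :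
    HasCoopColoring G := by
  obtain ⟨I, hI, hcov⟩ := hH
  have hsucc : ∀ w, w ∉ I 0 → ∃ k : Fin m, w ∈ I k.succ := fun w hw => by
    obtain ⟨k, hk⟩ := Set.mem_iUnion.1 (hcov ▸ Set.mem_univ w)
    cases k using Fin.cases with
    | zero => exact absurd hk hw
    | succ k => exact ⟨k, hk⟩
  by_cases h : ∃ a, hub a ∈ I 0
  · obtain ⟨a, ha⟩ := h
    exact hasCoopColoring_of_comap (copy a) (hcopy · a) (fun k => hI k.succ)
      fun v => hsucc _ fun hv => hI 0 ha hv (hstar a v)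
  · push Not at h
    exact hasCoopColoring_of_comap hub hhub (fun k => hI k.succ) fun v => hsucc _ (h v)

end CoopColoring

lemma maxDeg_le_iff {V : Type*} [Fintype V] {G : SimpleGraph V} {d : ℕ} :
    maxDeg G ≤ d ↔ ∀ v, (G.neighborSet v).ncard ≤ d := by
  simp [maxDeg]

lemma ncard_neighborSet_le_card_sub_one {V : Type*} [Finite V] (G : SimpleGraph V) (v : V) :
    (G.neighborSet v).ncard ≤ Nat.card V - 1 := by
  have := Set.ncard_lt_card (s := G.neighborSet v) fun h =>
    G.irrefl (h.symm ▸ Set.mem_univ v : v ∈ G.neighborSet v)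
  omega

section LocalLemma

open Finset

lemma card_filter_apply_eq_mul_card {ι α : Type*} [DecidableEq ι] [Fintype α] [DecidableEq α]
    {s : Finset (ι → α)} {i : ι} (hs : ∀ f ∈ s, ∀ a, Function.update f i a ∈ s) (a : α) :
    #{f ∈ s | f i = a} * Fintype.card α = #s := by
  have hfiber : ∀ b, #{f ∈ s | f i = b} = #{f ∈ s | f i = a} := fun b =>
    card_nbij' (Function.update · i a) (Function.update · i b)
      (fun f hf => mem_filter.2 ⟨hs f (mem_filter.1 hf).1 a, Function.update_self ..⟩)
      (fun f hf => mem_filter.2 ⟨hs f (mem_filter.1 hf).1 b, Function.update_self ..⟩)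
      (fun f hf => by
        simp only [Function.update_idem, ← (mem_filter.1 hf).2, Function.update_eq_self])
      (fun f hf => by
        simp only [Function.update_idem, ← (mem_filter.1 hf).2, Function.update_eq_self])
  calc #{f ∈ s | f i = a} * Fintype.card α = ∑ b, #{f ∈ s | f i = b} := by
        rw [sum_congr rfl fun b _ => hfiber b, sum_const, card_univ, smul_eq_mul, mul_comm]
    _ = #s := (card_eq_sum_card_fiberwise fun _ _ => mem_coe.2 (mem_univ _)).symm

variable {V : Type*} [Fintype V] {m : ℕ}

open Classical in
noncomputable def edgeEvents (G : Fin m → SimpleGraph V) : Finset (Fin m × Sym2 V) :=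
  univ.filter fun e => e.2 ∈ (G e.1).edgeSet

lemma mem_edgeEvents (G : Fin m → SimpleGraph V) {e : Fin m × Sym2 V} :
    e ∈ edgeEvents G ↔ e.2 ∈ (G e.1).edgeSet := by
  simp [edgeEvents]

variable [DecidableEq V]

/-- For an edge `e.2` of the `e.1`-th graph, this is the bad event of the local lemma. -/
def IsMonochromatic (f : V → Fin m) (e : Fin m × Sym2 V) : Prop := ∀ x ∈ e.2, f x = e.1

noncomputable def avoiding (S : Finset (Fin m × Sym2 V)) : Finset (V → Fin m) := by
  classical exact univ.filter fun f => ∀ e ∈ S, ¬ IsMonochromatic f e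

noncomputable def hitting (e : Fin m × Sym2 V) (S : Finset (Fin m × Sym2 V)) :
    Finset (V → Fin m) := by
  classical exact (avoiding S).filter fun f => IsMonochromatic f e

variable {f : V → Fin m} {e : Fin m × Sym2 V} {S S' : Finset (Fin m × Sym2 V)}

lemma mem_avoiding : f ∈ avoiding S ↔ ∀ e ∈ S, ¬ IsMonochromatic f e := by
  simp [avoiding]

lemma mem_hitting : f ∈ hitting e S ↔ f ∈ avoiding S ∧ IsMonochromatic f e := by
  simp [hitting]

lemma avoiding_anti (h : S ⊆ S') : avoiding S' ⊆ avoiding S :=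
  fun _ hf => mem_avoiding.2 fun e he => mem_avoiding.1 hf e (h he)

lemma hitting_anti (h : S ⊆ S') : hitting e S' ⊆ hitting e S :=
  fun _ hf => mem_hitting.2 ⟨avoiding_anti h (mem_hitting.1 hf).1, (mem_hitting.1 hf).2⟩

lemma avoiding_insert : avoiding (insert e S) = avoiding S \ hitting e S := by
  ext f
  simp only [mem_avoiding, mem_sdiff, mem_hitting, forall_mem_insert]
  tauto

lemma update_mem_avoiding {x : V} (hx : ∀ e ∈ S, x ∉ e.2) (hf : f ∈ avoiding S) (a : Fin m) :
    Function.update f x a ∈ avoiding S := by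
  refine mem_avoiding.2 fun e he hmono => mem_avoiding.1 hf e he fun y hy => ?_
  rw [← hmono y hy, Function.update_of_ne (ne_of_mem_of_not_mem hy (hx e he))]

/-- Events that avoid both ends of `s(u, v)` are independent of it. -/
lemma card_hitting_mul_sq (j : Fin m) {u v : V} (huv : u ≠ v)
    (hS : ∀ e ∈ S, u ∉ e.2 ∧ v ∉ e.2) :
    #(hitting (j, s(u, v)) S) * m ^ 2 = #(avoiding S) := by
  have hu : ∀ f ∈ avoiding S, ∀ a, Function.update f u a ∈ avoiding S :=
    fun _ hf => update_mem_avoiding (fun e he => (hS e he).1) hf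
  have hv : ∀ f ∈ {f ∈ avoiding S | f u = j}, ∀ a,
      Function.update f v a ∈ {f ∈ avoiding S | f u = j} := fun f hf a => by
    rw [mem_filter] at hf ⊢
    exact ⟨update_mem_avoiding (fun e he => (hS e he).2) hf.1 a,
      by rw [Function.update_of_ne huv, hf.2]⟩
  have hhit : hitting (j, s(u, v)) S = {f ∈ {f ∈ avoiding S | f u = j} | f v = j} := by
    ext f
    simp [mem_hitting, IsMonochromatic, and_assoc]
  have h₁ := card_filter_apply_eq_mul_card hv j
  have h₂ := card_filter_apply_eq_mul_card hu j
  rw [Fintype.card_fin] at h₁ h₂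
  rw [hhit, sq, ← mul_assoc, h₁, h₂]

lemma card_avoiding_le_two_mul {S₁ S₂ : Finset (Fin m × Sym2 V)} {q : ℕ} (hq : 0 < q)
    (hhit : ∀ e ∈ S₂, #(hitting e S₁) * q ≤ 2 * #(avoiding S₁)) (hS₂ : 4 * #S₂ ≤ q) :
    #(avoiding S₁) ≤ 2 * #(avoiding (S₁ ∪ S₂)) := by
  have hsub : avoiding S₁ ⊆ avoiding (S₁ ∪ S₂) ∪ S₂.biUnion (hitting · S₁) := by
    intro f hf
    by_cases h : ∃ e ∈ S₂, IsMonochromatic f e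
    · obtain ⟨e, he, hfe⟩ := h
      exact mem_union_right _ (mem_biUnion.2 ⟨e, he, mem_hitting.2 ⟨hf, hfe⟩⟩)
    · push Not at h
      refine mem_union_left _ (mem_avoiding.2 fun e he => ?_)
      rcases mem_union.1 he with he | he
      exacts [mem_avoiding.1 hf e he, h e he]
  set hitSum := ∑ e ∈ S₂, #(hitting e S₁)
  have hcover : #(avoiding S₁) ≤ #(avoiding (S₁ ∪ S₂)) + hitSum :=
    (card_le_card hsub).trans <| (card_union_le _ _).trans <| Nat.add_le_add_left card_biUnion_le _
  have hsum : hitSum * q ≤ #S₂ * (2 * #(avoiding S₁)) := by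
    rw [sum_mul]
    exact sum_le_card_nsmul _ _ _ hhit
  have : 2 * hitSum ≤ #(avoiding S₁) := Nat.le_of_mul_le_mul_right (by nlinarith) hq
  omega

section Graphs

variable {G : Fin m → SimpleGraph V} {d : ℕ} (hG : ∀ j v, ((G j).neighborSet v).ncard ≤ d)
include hG

lemma card_edgeEvents_mem_le (x : V) : #{e ∈ edgeEvents G | x ∈ e.2} ≤ m * d := by
  classical
  calc #{e ∈ edgeEvents G | x ∈ e.2}
      ≤ #(univ.biUnion fun j => ((G j).neighborSet x).toFinset.image fun y => (j, s(x, y))) := by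
        refine card_le_card ?_
        rintro ⟨j, s⟩ he
        obtain ⟨hs, hx⟩ := mem_filter.1 he
        obtain ⟨y, rfl⟩ : ∃ y, s = s(x, y) := ⟨_, (Sym2.other_spec hx).symm⟩
        exact mem_biUnion.2 ⟨j, mem_univ _,
          mem_image.2 ⟨y, Set.mem_toFinset.2 ((mem_edgeEvents G).1 hs), rfl⟩⟩
    _ ≤ ∑ j, #(((G j).neighborSet x).toFinset.image fun y => (j, s(x, y))) := card_biUnion_le
    _ ≤ ∑ _j : Fin m, d := sum_le_sum fun j _ =>
        card_image_le.trans ((Set.ncard_eq_toFinset_card' _).symm.le.trans (hG j x))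
    _ = m * d := by simp

lemma card_filter_mem_or_mem_le (hS : S ⊆ edgeEvents G) (u v : V) :
    #{e ∈ S | u ∈ e.2 ∨ v ∈ e.2} ≤ 2 * (m * d) := by
  have hsub : {e ∈ S | u ∈ e.2 ∨ v ∈ e.2} ⊆
      {e ∈ edgeEvents G | u ∈ e.2} ∪ {e ∈ edgeEvents G | v ∈ e.2} := by
    intro e he
    obtain ⟨he, h | h⟩ := mem_filter.1 he
    exacts [mem_union_left _ (mem_filter.2 ⟨hS he, h⟩),
      mem_union_right _ (mem_filter.2 ⟨hS he, h⟩)]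
  have := card_edgeEvents_mem_le hG u
  have := card_edgeEvents_mem_le hG v
  have := (card_le_card hsub).trans (card_union_le _ _)
  omega

/-- The local lemma, with every bad event of probability `1 / m ^ 2` depending on at most
`2 m d` others. -/
lemma card_hitting_mul_sq_le (hm : 8 * d ≤ m) :
    ∀ S ⊆ edgeEvents G, ∀ e ∈ edgeEvents G, #(hitting e S) * m ^ 2 ≤ 2 * #(avoiding S) := by
  intro S
  induction S using Finset.strongInduction with
  | H S ih =>
    rintro hS ⟨j, s⟩ he
    induction s using Sym2.ind with
    | h u v =>
      have huv : u ≠ v := ((G j).mem_edgeSet.1 ((mem_edgeEvents G).1 he)).ne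
      set S₂ := S.filter fun e => u ∈ e.2 ∨ v ∈ e.2
      set S₁ := S.filter fun e => ¬ (u ∈ e.2 ∨ v ∈ e.2)
      have hS₁ : S₁ ⊆ S := filter_subset _ _
      have hS₂ : #S₂ ≤ 2 * (m * d) := card_filter_mem_or_mem_le hG hS u v
      have hA : #(avoiding S₁) ≤ 2 * #(avoiding S) := by
        rw [← filter_union_filter_not_eq (fun e => u ∈ e.2 ∨ v ∈ e.2) S, union_comm]
        refine card_avoiding_le_two_mul (pow_pos j.pos 2) (fun e he' => ?_) (by nlinarith)
        have he'S : e ∈ S := filter_subset _ _ he'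
        have hlt : S₁ ⊂ S := ssubset_of_subset_of_ne hS₁ fun h =>
          (mem_filter.1 (h ▸ he'S : e ∈ S₁)).2 (mem_filter.1 he').2
        exact ih S₁ hlt (hS₁.trans hS) e (hS he'S)
      calc #(hitting (j, s(u, v)) S) * m ^ 2 ≤ #(hitting (j, s(u, v)) S₁) * m ^ 2 :=
            Nat.mul_le_mul_right _ (card_le_card (hitting_anti hS₁))
        _ = #(avoiding S₁) := card_hitting_mul_sq j huv fun e he' => by
            simpa [not_or] using (mem_filter.1 he').2
        _ ≤ 2 * #(avoiding S) := hA

lemma card_avoiding_pos (hd : 0 < d) (hm : 8 * d ≤ m) :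
    ∀ S ⊆ edgeEvents G, 0 < #(avoiding S) := by
  intro S
  induction S using Finset.induction_on with
  | empty =>
    intro _
    have : Nonempty (Fin m) := ⟨⟨0, by omega⟩⟩
    exact card_pos.2 ⟨fun _ => ⟨0, by omega⟩, mem_avoiding.2 fun _ h => absurd h (notMem_empty _)⟩
  | insert e S _ ih =>
    intro hS
    have hA := ih ((subset_insert _ _).trans hS)
    have hH := card_hitting_mul_sq_le hG hm S ((subset_insert _ _).trans hS) e
      (hS (mem_insert_self _ _))
    have hsub : hitting e S ⊆ avoiding S := fun _ hf => (mem_hitting.1 hf).1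
    rw [avoiding_insert, card_sdiff_of_subset hsub]
    have : 64 ≤ m ^ 2 := by nlinarith
    have : 32 * #(hitting e S) ≤ #(avoiding S) := by nlinarith
    omega

theorem hasCoopColoring_of_ncard_neighborSet_le (hd : 0 < d) (hm : 8 * d ≤ m) :
    HasCoopColoring G := by
  obtain ⟨f, hf⟩ := card_pos.1 (card_avoiding_pos hG hd hm _ subset_rfl)
  refine ⟨fun j => {v | f v = j}, fun j u hu v hv huv => ?_,
    Set.eq_univ_of_forall fun v => Set.mem_iUnion.2 ⟨f v, rfl⟩⟩
  refine mem_avoiding.1 hf (j, s(u, v)) ((mem_edgeEvents G).2 huv) fun x hx => ?_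
  rcases Sym2.mem_iff.1 hx with rfl | rfl
  exacts [hu, hv]

end Graphs

end LocalLemma

lemma TreesColorable.mono {d m m' : ℕ} (h : TreesColorable d m) (hm : m ≤ m') :
    TreesColorable d m' := fun V _ T hT hdeg =>
  HasCoopColoring.of_comp_injective (Fin.castLE_injective hm)
    (h V (T ∘ Fin.castLE hm) (fun _ => hT _) fun _ => hdeg _)

lemma treesColorable_eight_mul {d : ℕ} (hd : 0 < d) : TreesColorable d (8 * d) := by
  intro V _ T _ hdeg
  classical
  exact hasCoopColoring_of_ncard_neighborSet_le (fun j => maxDeg_le_iff.1 (hdeg j)) hd le_rfl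

lemma lt_mT_of_not_treesColorable {d m : ℕ} (hd : 0 < d) (h : ¬ TreesColorable d m) :
    m < mT d :=
  le_csInf ⟨8 * d, treesColorable_eight_mul hd⟩ fun _ hk =>
    lt_of_not_ge fun hkm => h (hk.mono hkm)

structure ParentTree (V : Type*) where
  parent : V → V
  root : V
  height : V → ℕ
  parent_root : parent root = root
  height_parent_lt : ∀ v, v ≠ root → height (parent v) < height v

namespace ParentTree

variable {V α β : Type*}

def graph (T : ParentTree V) : SimpleGraph V := fromRel fun u v => T.parent u = v

lemma graph_adj (T : ParentTree V) {u v : V} :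
    T.graph.Adj u v ↔ u ≠ v ∧ (T.parent u = v ∨ T.parent v = u) :=
  fromRel_adj _ u v

lemma graph_adj_parent (T : ParentTree V) {v : V} (hv : v ≠ T.root) :
    T.graph.Adj v (T.parent v) :=
  ⟨fun h => (T.height_parent_lt v hv).ne (congrArg T.height h.symm), Or.inl rfl⟩

lemma reachable_root (T : ParentTree V) (v : V) : T.graph.Reachable v T.root := by
  induction hn : T.height v using Nat.strong_induction_on generalizing v with
  | _ n ih =>
    by_cases hv : v = T.root
    · rw [hv]
    · exact (T.graph_adj_parent hv).reachable.trans
        (ih _ (hn ▸ T.height_parent_lt v hv) _ rfl)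

lemma connected (T : ParentTree V) : T.graph.Connected :=
  haveI : Nonempty V := ⟨T.root⟩
  ⟨fun u v => (T.reachable_root u).trans (T.reachable_root v).symm⟩

lemma bijective_edge_parent (T : ParentTree V) :
    Function.Bijective fun v : {v // v ≠ T.root} =>
      (⟨s(v, T.parent v), T.graph_adj_parent v.2⟩ : T.graph.edgeSet) := by
  constructor
  · rintro ⟨u, hu⟩ ⟨v, hv⟩ h
    have h' : s(u, T.parent u) = s(v, T.parent v) := congrArg Subtype.val h
    rcases Sym2.eq_iff.1 h' with ⟨huv, -⟩ | ⟨huv, hvu⟩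
    · exact Subtype.ext huv
    · have hvu' : T.height v < T.height u := hvu ▸ T.height_parent_lt u hu
      have huv' : T.height u < T.height v := huv ▸ T.height_parent_lt v hv
      omega
  · rintro ⟨e, he⟩
    induction e using Sym2.ind with
    | _ a b =>
      rw [mem_edgeSet, graph_adj] at he
      obtain ⟨hab, rfl | rfl⟩ := he
      · refine ⟨⟨a, fun h => hab ?_⟩, rfl⟩
        rw [h, T.parent_root]
      · refine ⟨⟨b, fun h => hab ?_⟩, Subtype.ext Sym2.eq_swap⟩
        rw [h, T.parent_root]

lemma isTree [Finite V] (T : ParentTree V) : T.graph.IsTree := by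
  rw [isTree_iff_connected_and_card,
    ← Nat.card_congr (Equiv.ofBijective _ T.bijective_edge_parent)]
  refine ⟨T.connected, ?_⟩
  have := Fintype.ofFinite V
  classical
  have : 0 < Fintype.card V := Fintype.card_pos_iff.2 ⟨T.root⟩
  rw [Nat.card_eq_fintype_card, Nat.card_eq_fintype_card, Fintype.card_subtype_compl,
    Fintype.card_subtype_eq]
  omega

section Constructions

variable [DecidableEq V] [DecidableEq β]

def star (c : V) : ParentTree V where
  parent _ := c
  root := c
  height v := if v = c then 0 else 1
  parent_root := rfl
  height_parent_lt v hv := by simp [hv]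

def addRoot (T : ParentTree V) : ParentTree (Option V) where
  parent
    | none => none
    | some v => if v = T.root then none else some (T.parent v)
  root := none
  height
    | none => 0
    | some v => T.height v + 1
  parent_root := rfl
  height_parent_lt
    | none, h => absurd rfl h
    | some v, _ => by
      by_cases hv : v = T.root
      · simp [hv]
      · simpa [hv] using T.height_parent_lt v hv

lemma star_adj_center (c v : V) (hv : v ≠ c) : (star c).graph.Adj c v :=
  ⟨hv.symm, Or.inr rfl⟩

@[simp]
lemma addRoot_root (T : ParentTree V) : T.addRoot.root = none := rfl

/-- A copy of `B` on every fibre `{a} × β`, with the roots of these copies forming a copy of `A`. -/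
def lex (A : ParentTree α) (B : ParentTree β) : ParentTree (α × β) where
  parent x := if x.2 = B.root then (A.parent x.1, B.root) else (x.1, B.parent x.2)
  root := (A.root, B.root)
  height x := A.height x.1 + B.height x.2
  parent_root := by simp [A.parent_root]
  height_parent_lt := by
    rintro ⟨a, b⟩ hab
    by_cases hb : b = B.root
    · subst hb
      have ha : a ≠ A.root := fun ha => hab (by rw [ha])
      simpa using A.height_parent_lt a ha
    · simpa [hb] using B.height_parent_lt b hb

lemma lex_adj (A : ParentTree α) (B : ParentTree β) {x y : α × β} :
    (A.lex B).graph.Adj x y ↔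
      (x.1 = y.1 ∧ B.graph.Adj x.2 y.2) ∨
        (x.2 = B.root ∧ y.2 = B.root ∧ A.graph.Adj x.1 y.1) := by
  obtain ⟨a, b⟩ := x
  obtain ⟨a', b'⟩ := y
  simp only [graph_adj, lex]
  by_cases hb : b = B.root <;> by_cases hb' : b' = B.root <;>
    simp [hb, hb', Prod.ext_iff, B.parent_root] <;> aesop

lemma lex_adj_of_adj_right (A : ParentTree α) {B : ParentTree β} (a : α) {b b' : β}
    (h : B.graph.Adj b b') : (A.lex B).graph.Adj (a, b) (a, b') :=
  (lex_adj A B).2 (Or.inl ⟨rfl, h⟩)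

lemma lex_adj_of_adj_left {A : ParentTree α} (B : ParentTree β) {a a' : α}
    (h : A.graph.Adj a a') : (A.lex B).graph.Adj (a, B.root) (a', B.root) :=
  (lex_adj A B).2 (Or.inr ⟨rfl, rfl, h⟩)

lemma addRoot_adj_some (T : ParentTree V) {u v : V} :
    T.addRoot.graph.Adj (some u) (some v) ↔ T.graph.Adj u v := by
  simp only [graph_adj, addRoot]
  split_ifs <;> aesop (add simp T.parent_root)

lemma addRoot_adj_none (T : ParentTree V) {o : Option V} :
    T.addRoot.graph.Adj none o ↔ o = some T.root := by
  cases o with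
  | none => simp
  | some v => by_cases hv : v = T.root <;> simp [graph_adj, addRoot, hv]

end Constructions

section Degrees

variable [DecidableEq V] [DecidableEq β]

lemma ncard_neighborSet_lex_le [Finite α] [Finite β] (A : ParentTree α) (B : ParentTree β)
    (a : α) (b : β) :
    ((A.lex B).graph.neighborSet (a, b)).ncard ≤
      (B.graph.neighborSet b).ncard + if b = B.root then (A.graph.neighborSet a).ncard else 0 := by
  have hsub : (A.lex B).graph.neighborSet (a, b) ⊆ Prod.mk a '' B.graph.neighborSet b ∪
      (·, b) '' {a' | b = B.root ∧ A.graph.Adj a a'} := by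
    rintro ⟨a', b'⟩ h
    rcases (lex_adj A B).1 h with ⟨rfl, hbb⟩ | ⟨rfl, rfl, haa⟩
    · exact Or.inl ⟨b', hbb, rfl⟩
    · exact Or.inr ⟨a', ⟨rfl, haa⟩, rfl⟩
  refine (Set.ncard_le_ncard hsub (Set.toFinite _)).trans <| (Set.ncard_union_le _ _).trans <|
    add_le_add (Set.ncard_image_le (Set.toFinite _)) <|
      (Set.ncard_image_le (Set.toFinite _)).trans ?_
  split_ifs with hb
  · simp only [hb, true_and]
    rfl
  · simp [hb]

lemma ncard_neighborSet_addRoot_none (T : ParentTree V) :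
    (T.addRoot.graph.neighborSet none).ncard = 1 := by
  rw [← Set.ncard_singleton (some T.root)]
  congr 1
  ext o
  exact T.addRoot_adj_none

lemma ncard_neighborSet_addRoot_some_le [Finite V] (T : ParentTree V) (v : V) :
    (T.addRoot.graph.neighborSet (some v)).ncard ≤ (T.graph.neighborSet v).ncard + 1 := by
  have hsub : T.addRoot.graph.neighborSet (some v) ⊆ some '' T.graph.neighborSet v ∪ {none} := by
    rintro (_ | u) h
    · exact Or.inr rfl
    · exact Or.inl ⟨u, T.addRoot_adj_some.1 h, rfl⟩
  refine (Set.ncard_le_ncard hsub (Set.toFinite _)).trans <| (Set.ncard_union_le _ _).trans ?_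
  rw [Set.ncard_singleton]
  exact Nat.add_le_add_right (Set.ncard_image_le (Set.toFinite _)) 1

end Degrees

variable [DecidableEq V] {m : ℕ}

def succSystem (h₀ : V) (T : Fin m → ParentTree V) : Fin (m + 1) → ParentTree (V × Option V) :=
  Fin.cons ((star h₀).lex (star none)) fun k => (T k).lex (T k).addRoot

lemma hasCoopColoring_of_succSystem (h₀ : V) (T : Fin m → ParentTree V)
    (h : HasCoopColoring fun k => (succSystem h₀ T k).graph) :
    HasCoopColoring fun k => (T k).graph :=
  hasCoopColoring_of_hub_copy (fun a => (a, none)) (fun a v => (a, some v))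
    (fun k _ _ huv => lex_adj_of_adj_left (T k).addRoot huv)
    (fun k a _ _ huv => lex_adj_of_adj_right (T k) a ((addRoot_adj_some _).2 huv))
    (fun a v => lex_adj_of_adj_right (star h₀) a (star_adj_center _ _ (Option.some_ne_none v))) h

variable [Finite V]

lemma ncard_neighborSet_succSystem_zero_le (h₀ : V) (T : Fin m → ParentTree V)
    (x : V × Option V) :
    ((succSystem h₀ T 0).graph.neighborSet x).ncard ≤ 2 * Nat.card V - 1 := by
  have hB := ncard_neighborSet_le_card_sub_one (star (none : Option V)).graph x.2
  have hA := ncard_neighborSet_le_card_sub_one (star h₀).graph x.1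
  rw [Finite.card_option] at hB
  refine (ncard_neighborSet_lex_le _ _ x.1 x.2).trans ?_
  split_ifs <;> omega

lemma ncard_neighborSet_succSystem_succ_le (h₀ : V) (T : Fin m → ParentTree V) {D : ℕ}
    (hT : ∀ k v, ((T k).graph.neighborSet v).ncard ≤ D) (k : Fin m) (x : V × Option V) :
    ((succSystem h₀ T k.succ).graph.neighborSet x).ncard ≤ D + 1 := by
  obtain ⟨a, _ | c⟩ := x
  · have hlex := ncard_neighborSet_lex_le (T k) (T k).addRoot a none
    rw [addRoot_root, if_pos rfl, ncard_neighborSet_addRoot_none] at hlex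
    have := hT k a
    exact hlex.trans (by omega)
  · have hlex := ncard_neighborSet_lex_le (T k) (T k).addRoot a (some c)
    rw [addRoot_root, if_neg (Option.some_ne_none c), add_zero] at hlex
    exact hlex.trans <|
      (ncard_neighborSet_addRoot_some_le _ c).trans (Nat.add_le_add_right (hT k c) 1)

end ParentTree

lemma mul_succ_le_two_pow {N m : ℕ} (hN : N ≤ 2 ^ (2 ^ m - 1)) :
    N * (N + 1) ≤ 2 ^ (2 ^ (m + 1) - 1) := by
  have hexp : 2 ^ (m + 1) - 1 = (2 ^ m - 1) * 2 + 1 := by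
    have := Nat.one_le_two_pow (n := m)
    rw [pow_succ]
    omega
  rw [hexp, pow_succ, pow_mul]
  calc N * (N + 1) ≤ N * N * 2 := by nlinarith
    _ ≤ (2 ^ (2 ^ m - 1)) ^ 2 * 2 := by rw [sq]; gcongr

lemma two_mul_sub_one_le_two_pow {N m : ℕ} (hN : N ≤ 2 ^ (2 ^ m - 1)) :
    2 * N - 1 ≤ 2 ^ 2 ^ m := by
  have : 2 ^ 2 ^ m = 2 * 2 ^ (2 ^ m - 1) := by
    rw [← pow_succ', Nat.sub_add_cancel Nat.one_le_two_pow]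
  omega

lemma succ_le_two_pow_two_pow {D m : ℕ} (hm : 0 < m) (hD : D ≤ 2 ^ 2 ^ (m - 1)) :
    D + 1 ≤ 2 ^ 2 ^ m := by
  have hsq : 2 ^ 2 ^ m = 2 ^ 2 ^ (m - 1) * 2 ^ 2 ^ (m - 1) := by
    rw [← pow_add, ← two_mul, ← pow_succ', Nat.sub_add_cancel hm]
  have : 2 ≤ 2 ^ 2 ^ (m - 1) := Nat.le_self_pow (pow_pos two_pos _).ne' 2
  nlinarith

theorem exists_parentTrees_not_hasCoopColoring (m : ℕ) :
    ∃ (V : Type) (_ : Finite V) (_ : Nonempty V) (T : Fin m → ParentTree V),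
      Nat.card V ≤ 2 ^ (2 ^ m - 1) ∧
      (∀ k v, ((T k).graph.neighborSet v).ncard ≤ 2 ^ 2 ^ (m - 1)) ∧
      ¬ HasCoopColoring fun k => (T k).graph := by
  induction m with
  | zero =>
    refine ⟨Unit, inferInstance, inferInstance, finZeroElim, by simp, finZeroElim, ?_⟩
    rintro ⟨I, -, hcov⟩
    exact Set.empty_ne_univ (by simpa using hcov)
  | succ m ih =>
    obtain ⟨V, _, ⟨h₀⟩, T, hcard, hdeg, hT⟩ := ih
    classical
    refine ⟨V × Option V, inferInstance, ⟨(h₀, none)⟩, ParentTree.succSystem h₀ T, ?_, ?_,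
      fun h => hT (ParentTree.hasCoopColoring_of_succSystem h₀ T h)⟩
    · rw [Nat.card_prod, Finite.card_option]
      exact mul_succ_le_two_pow hcard
    · rw [Nat.add_sub_cancel]
      intro k x
      cases k using Fin.cases with
      | zero =>
        exact (ParentTree.ncard_neighborSet_succSystem_zero_le h₀ T x).trans
          (two_mul_sub_one_le_two_pow hcard)
      | succ k =>
        exact (ParentTree.ncard_neighborSet_succSystem_succ_le h₀ T hdeg k x).trans
          (succ_le_two_pow_two_pow k.pos le_rfl)

theorem exists_trees_not_hasCoopColoring (m : ℕ) :
    ∃ (n : ℕ) (T : Fin m → SimpleGraph (Fin n)), (∀ i, (T i).IsTree) ∧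
      (∀ i, maxDeg (T i) ≤ 2 ^ 2 ^ (m - 1)) ∧ ¬ HasCoopColoring T := by
  obtain ⟨V, _, _, T, -, hdeg, hT⟩ := exists_parentTrees_not_hasCoopColoring m
  have := Fintype.ofFinite V
  let e := Fintype.equivFin V
  refine ⟨_, fun k => (T k).graph.map e.toEmbedding, fun k => ?_, fun k => ?_, fun h => hT ?_⟩
  · exact (Iso.map e _).isTree_iff.1 (T k).isTree
  · refine maxDeg_le_iff.2 fun w => ?_
    obtain ⟨v, rfl⟩ := e.surjective w
    rw [← Equiv.coe_toEmbedding, neighborSet_map,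
      Set.ncard_image_of_injective _ e.toEmbedding.injective]
    exact hdeg k v
  · exact h.comap e fun _ _ _ huv => map_adj_apply.2 huv

lemma two_pow_two_pow_lt_of_lt_logb_logb {d k : ℕ} (hd : 2 ≤ d)
    (hk : (k : ℝ) < Real.logb 2 (Real.logb 2 d)) : 2 ^ 2 ^ k < d := by
  have hd' : (1 : ℝ) < d := by exact_mod_cast hd
  rw [Real.lt_logb_iff_rpow_lt one_lt_two (Real.logb_pos one_lt_two hd'),
    Real.lt_logb_iff_rpow_lt one_lt_two (by positivity), Real.rpow_natCast] at hk
  exact_mod_cast hk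

/-- For every `d ≥ 2` there are `⌈log₂ log₂ d⌉` trees on a common finite vertex
set, each of maximum degree at most `d`, with no cooperative coloring;
consequently `m_T(d) > log₂ log₂ d`. -/
theorem trees_lower_bound (d : ℕ) (hd : 2 ≤ d) :
    (∃ (n : ℕ) (T : Fin ⌈Real.logb 2 (Real.logb 2 d)⌉₊ → SimpleGraph (Fin n)),
      (∀ i, (T i).IsTree) ∧ (∀ i, maxDeg (T i) ≤ d) ∧ ¬ HasCoopColoring T) ∧
    Real.logb 2 (Real.logb 2 d) < (mT d : ℝ) := by
  set m := ⌈Real.logb 2 (Real.logb 2 d)⌉₊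
  obtain ⟨n, T, hT, hdeg, hcol⟩ := exists_trees_not_hasCoopColoring m
  have hdeg' : ∀ i, maxDeg (T i) ≤ d := fun i => (hdeg i).trans
    (two_pow_two_pow_lt_of_lt_logb_logb hd (Nat.lt_ceil.1 (Nat.sub_lt i.pos one_pos))).le
  have hlt : m < mT d := lt_mT_of_not_treesColorable (by omega) fun h => hcol (h _ T hT hdeg')
  refine ⟨⟨n, T, hT, hdeg', hcol⟩, ?_⟩
  calc Real.logb 2 (Real.logb 2 d) ≤ m := Nat.le_ceil _
    _ < mT d := by exact_mod_cast hlt
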